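/- The dispersionless Hamilton–Jacobi equation of the two-dimensional Schrödinger operator: if both mixed dispersionless Hirota equations hold, i.e. p(λ) − C_1(μ) = (p(λ) + C_1(μ))·E_×(λ,μ) and p̄(μ) − B_1(λ) = (p̄(μ) + B_1(λ))·E_×(λ,μ) as identities of formal series in λ^{−1}, μ^{−1} with coefficients in R, then p(z)·B_1(z) = u and C_1(z)·p̄(z) = u as identities in R((z^{−1})), where u = −2∂_1∂̄_1F; that is, both products ∂_{t_1}S(z)·∂_{t̄_1}S(z) and ∂_{t_1}S̄(z)·∂_{t̄_1}S̄(z) are independent of z and equal to the constant u. -/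

import Mathlib

noncomputable section

/-- The series `h ∈ R[w][[z⁻¹]]` with `(p(z) − w)/z = 1 + h`, for
`p(z) = z + Σ_{j≥1} c_j z^{−j}`; the power series variable is `u = z⁻¹`. -/
def hSer {R : Type*} [CommRing R] (c : ℕ → R) : PowerSeries (Polynomial R) :=
  PowerSeries.mk fun k =>
    if k = 0 then 0 else if k = 1 then -Polynomial.X else Polynomial.C (c (k - 1))

/-- `log (1 + h) = Σ_{k≥1} (−1)^{k−1} h^k / k`, defined coefficientwise. -/
def logOneAdd {A : Type*} [CommRing A] [Algebra ℚ A] (h : PowerSeries A) : PowerSeries A :=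
  PowerSeries.mk fun m =>
    ∑ k ∈ Finset.Icc 1 m, ((-1 : ℚ) ^ (k - 1) * (k : ℚ)⁻¹) • PowerSeries.coeff m (h ^ k)

/-- `Φ` is the family of Faber polynomials of `p(z) = z + Σ_{j≥1} c_j z^{−j}`, i.e.
`log ((p(z) − w)/z) = − Σ_{n≥1} (z^{−n}/n) Φ_n(w)` in `R[w][[z⁻¹]]`. -/
def FaberRel {R : Type*} [CommRing R] [Algebra ℚ R] (c : ℕ → R) (Φ : ℕ → Polynomial R) : Prop :=
  logOneAdd (hSer c) = PowerSeries.mk fun n => if n = 0 then 0 else (-(n : ℚ)⁻¹) • Φ n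

/-- The coefficient family of the generating series of second derivatives of `F`:
`gen2 Dout Din F m` is the coefficient of `z^{-j}` in
`− Σ_{n≥0} (2 z^{−2n−1}/(2n+1)) ∂ᵒᵘᵗ_{2n+1} ∂ⁱⁿ_{2m+1} F`. -/
def gen2 {R : Type*} [CommRing R] [Algebra ℚ R]
    (Dout Din : ℕ → Derivation ℚ R R) (F : R) (m : ℕ) : ℕ → R :=
  fun j => if j % 2 = 1 then ((-2 : ℚ) * (j : ℚ)⁻¹) • Dout (j / 2) (Din m F) else 0

/-- `p(z) = z − Σ_{n≥0} (2 z^{−2n−1}/(2n+1)) ∂_{2n+1}∂_1 F` as a formal Laurent series in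
`z⁻¹` (the Hahn series exponent `k` records the power `z^{-k}`). -/
def pzH {R : Type*} [CommRing R] [Algebra ℚ R]
    (D : ℕ → Derivation ℚ R R) (F : R) : HahnSeries ℤ R :=
  HahnSeries.single (-1 : ℤ) 1 +
    HahnSeries.ofPowerSeries ℤ R (PowerSeries.mk (gen2 D D F 0))

/-- The ring of formal series in `λ⁻¹, μ⁻¹` (with finitely many positive powers of `λ, μ`)
with coefficients in `R`: the outer exponent is the power of `λ⁻¹`, the inner one the
power of `μ⁻¹`. -/
abbrev W2 (R : Type*) [CommRing R] : Type _ := HahnSeries ℤ (HahnSeries ℤ R)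

/-- `λ` as an element of `W2 R`. -/
def lamW2 (R : Type*) [CommRing R] : W2 R := HahnSeries.single (-1 : ℤ) 1

/-- `μ` as an element of `W2 R`. -/
def muW2 (R : Type*) [CommRing R] : W2 R := HahnSeries.C (HahnSeries.single (-1 : ℤ) (1 : R))

/-- A series `Σ_{k≥0} a_k λ^{-k}` as an element of `W2 R`. -/
def lSer {R : Type*} [CommRing R] (a : ℕ → R) : W2 R :=
  HahnSeries.ofPowerSeries ℤ (HahnSeries ℤ R)
    (PowerSeries.mk fun k => HahnSeries.C (a k))

/-- A series `Σ_{l≥0} a_l μ^{-l}` as an element of `W2 R`. -/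
def mSer {R : Type*} [CommRing R] (a : ℕ → R) : W2 R :=
  HahnSeries.C (HahnSeries.ofPowerSeries ℤ R (PowerSeries.mk a))

/-- A double power series in `λ⁻¹, μ⁻¹` as an element of `W2 R`. -/
def toW2 {R : Type*} [CommRing R] (f : PowerSeries (PowerSeries R)) : W2 R :=
  HahnSeries.ofPowerSeries ℤ (HahnSeries ℤ R)
    (PowerSeries.map (HahnSeries.ofPowerSeries ℤ R) f)

/-- The exponential `exp G = Σ_{k≥0} G^k/k!` of a power series with zero constant term,
defined coefficientwise. -/
def expPS {A : Type*} [CommRing A] [Algebra ℚ A] (G : PowerSeries A) : PowerSeries A :=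
  PowerSeries.mk fun a =>
    ∑ k ∈ Finset.range (a + 1), ((k.factorial : ℚ))⁻¹ • PowerSeries.coeff a (G ^ k)

/-- The argument `4 Σ_{n,m≥0} (λ^{−2n−1}μ^{−2m−1}/((2n+1)(2m+1))) ∂ᵒᵘᵗ_{2n+1}∂ⁱⁿ_{2m+1} F`
of the dispersionless Hirota exponential, as a power series in `λ⁻¹` (outer index) with
coefficients in `R[[μ⁻¹]]`. -/
def Earg {R : Type*} [CommRing R] [Algebra ℚ R]
    (Dout Din : ℕ → Derivation ℚ R R) (F : R) : PowerSeries (PowerSeries R) :=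
  PowerSeries.mk fun i =>
    if i % 2 = 1 then
      PowerSeries.mk fun j =>
        if j % 2 = 1 then ((4 : ℚ) * ((i : ℚ) * (j : ℚ))⁻¹) • Dout (i / 2) (Din (j / 2) F)
        else 0
    else 0

/-- `E(λ,μ) = exp (4 Σ_{n,m≥0} (λ^{−2n−1}μ^{−2m−1}/((2n+1)(2m+1))) ∂ᵒᵘᵗ_{2n+1}∂ⁱⁿ_{2m+1} F)`
as an element of `W2 R`. -/
def EW {R : Type*} [CommRing R] [Algebra ℚ R]
    (Dout Din : ℕ → Derivation ℚ R R) (F : R) : W2 R :=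
  toW2 (expPS (Earg Dout Din F))

/-- `p(λ)` as an element of `W2 R`. -/
def pLamW {R : Type*} [CommRing R] [Algebra ℚ R]
    (D : ℕ → Derivation ℚ R R) (F : R) : W2 R :=
  lamW2 R + lSer (gen2 D D F 0)

/-! Multiplying the first Hirota equation by `p̄(μ) + B₁(λ)`, the second by `p(λ) + C₁(μ)` and
subtracting eliminates `E_×` and leaves `p(λ) B₁(λ) = C₁(μ) p̄(μ)`. The left side is a series in
`λ` alone and the right side one in `μ` alone, so both are the same constant, namely the
`λ⁰`-coefficient of `p(λ) B₁(λ)`; since `p(λ) = λ + O(λ⁻¹)`, that is the `λ⁻¹`-coefficient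
`−2 ∂₁∂̄₁F` of `B₁`. -/
theorem mul_eq_mul_of_sub_eq_add_mul {A : Type*} [CommRing A] [Module ℚ A] {x y u v e : A}
    (hx : x - y = (x + y) * e) (hu : u - v = (u + v) * e) : x * v = y * u := by
  have h : (2 : ℚ) • (x * v - y * u) = 0 := by
    rw [two_smul]
    linear_combination (u + v) * hx - (x + y) * hu
  exact sub_eq_zero.mp ((smul_eq_zero.mp h).resolve_left two_ne_zero)

namespace HahnSeries

section

variable {Γ R : Type*} [AddCommMonoid Γ] [PartialOrder Γ] [IsOrderedCancelAddMonoid Γ]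
  [NonAssocSemiring R]

/-- In `HahnSeries Γ (HahnSeries Γ R)`, `x.map C` is `x` as a series in the outer variable and
`C y` is `y` as a series in the inner one; if they agree, both are constants. -/
theorem eq_C_of_map_C_eq_C {x y : HahnSeries Γ R}
    (h : x.map (C : R →+* HahnSeries Γ R) = C y) : x = C (x.coeff 0) ∧ y = C (x.coeff 0) := by
  have hcoeff (g : Γ) : C (x.coeff g) = (C y : HahnSeries Γ (HahnSeries Γ R)).coeff g := by
    rw [← h, map_coeff]
  refine ⟨?_, by simpa using (hcoeff 0).symm⟩
  ext g
  by_cases hg : g = 0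
  · simp [hg]
  · have hxg := hcoeff g
    rw [C_apply (a := y), coeff_single_of_ne hg, ← C_zero] at hxg
    rw [C_injective hxg, C_apply, coeff_single_of_ne hg]

end

section

variable {Γ R S : Type*} [PartialOrder Γ] [NonAssocSemiring R] [NonAssocSemiring S]

theorem map_single_ringHom [Zero Γ] (f : R →+* S) (a : Γ) (r : R) :
    (single a r).map f = single a (f r) :=
  HahnSeries.map_single f.toMonoidWithZeroHom.toZeroHom

theorem map_add_ringHom (f : R →+* S) (x y : HahnSeries Γ R) :
    (x + y).map f = x.map f + y.map f :=
  HahnSeries.map_add f.toAddMonoidHom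

theorem map_mul_ringHom [AddCommMonoid Γ] [IsOrderedCancelAddMonoid Γ] (f : R →+* S)
    (x y : HahnSeries Γ R) :
    (x * y).map f = x.map f * y.map f :=
  HahnSeries.map_mul f.toNonUnitalRingHom

end

section

variable {Γ R S : Type*} [Semiring Γ] [PartialOrder Γ] [IsStrictOrderedRing Γ]
  [Semiring R] [Semiring S]

theorem map_ofPowerSeries (f : R →+* S) (p : PowerSeries R) :
    (ofPowerSeries Γ R p).map f = ofPowerSeries Γ S (p.map f) := by
  ext g
  by_cases hg : g ∈ Set.range ((↑) : ℕ → Γ)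
  · obtain ⟨n, rfl⟩ := hg
    rw [map_coeff, ofPowerSeries_apply_coeff, ofPowerSeries_apply_coeff, PowerSeries.coeff_map]
  · rw [map_coeff, ofPowerSeries_apply, ofPowerSeries_apply, embDomain_of_notMem_range hg,
      embDomain_of_notMem_range hg, map_zero]

end

section

variable {R : Type*} [Semiring R]

theorem coeff_zero_single_neg_one_mul_ofPowerSeries (r : R) (p : PowerSeries R) :
    (single (-1 : ℤ) r * ofPowerSeries ℤ R p).coeff 0 = r * PowerSeries.coeff 1 p := by
  have h := coeff_single_mul_add (r := r) (x := ofPowerSeries ℤ R p) (a := (1 : ℕ)) (b := -1)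
  rwa [ofPowerSeries_apply_coeff, Nat.cast_one, add_neg_cancel] at h

theorem coeff_zero_ofPowerSeries (p : PowerSeries R) :
    (ofPowerSeries ℤ R p).coeff 0 = PowerSeries.constantCoeff p := by
  simpa using ofPowerSeries_apply_coeff (Γ := ℤ) p 0

end

end HahnSeries

section

open HahnSeries

theorem lSer_eq_map {R : Type*} [CommRing R] (a : ℕ → R) :
    lSer a = (ofPowerSeries ℤ R (PowerSeries.mk a)).map (C : R →+* HahnSeries ℤ R) := by
  rw [map_ofPowerSeries, lSer]
  rfl

variable {R : Type*} [CommRing R] [Algebra ℚ R]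

theorem pLamW_eq_map (D : ℕ → Derivation ℚ R R) (F : R) :
    pLamW D F = (pzH D F).map (C : R →+* HahnSeries ℤ R) := by
  rw [pzH, pLamW, map_add_ringHom, map_single_ringHom, map_one, lSer_eq_map, lamW2]

theorem gen2_zero (Dout Din : ℕ → Derivation ℚ R R) (F : R) (m : ℕ) :
    gen2 Dout Din F m 0 = 0 := by
  simp [gen2]

theorem gen2_one (Dout Din : ℕ → Derivation ℚ R R) (F : R) (m : ℕ) :
    gen2 Dout Din F m 1 = (-2 : ℚ) • Dout 0 (Din m F) := by
  simp [gen2]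

theorem coeff_zero_pzH_mul_ofPowerSeries (D : ℕ → Derivation ℚ R R) (F : R)
    (q : PowerSeries R) :
    (pzH D F * ofPowerSeries ℤ R q).coeff 0 = PowerSeries.coeff 1 q := by
  rw [pzH, add_mul, coeff_add, coeff_zero_single_neg_one_mul_ofPowerSeries, one_mul, ← map_mul,
    coeff_zero_ofPowerSeries, map_mul, PowerSeries.constantCoeff_mk, gen2_zero, zero_mul, add_zero]

end

theorem stmt14_general {R : Type*} [CommRing R] [Algebra ℚ R]
    (D Db : ℕ → Derivation ℚ R R) (F : R)
    (h1 : pLamW D F - mSer (gen2 Db D F 0)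
        = (pLamW D F + mSer (gen2 Db D F 0)) * EW D Db F)
    (h2 : HahnSeries.C (pzH Db F) - lSer (gen2 D Db F 0)
        = (HahnSeries.C (pzH Db F) + lSer (gen2 D Db F 0)) * EW D Db F) :
    pzH D F * HahnSeries.ofPowerSeries ℤ R (PowerSeries.mk (gen2 D Db F 0))
        = HahnSeries.C ((-2 : ℚ) • D 0 (Db 0 F)) ∧
    HahnSeries.ofPowerSeries ℤ R (PowerSeries.mk (gen2 Db D F 0)) * pzH Db F
        = HahnSeries.C ((-2 : ℚ) • D 0 (Db 0 F)) := by
  have hsep : (pzH D F * HahnSeries.ofPowerSeries ℤ R (PowerSeries.mk (gen2 D Db F 0))).map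
      (HahnSeries.C : R →+* HahnSeries ℤ R) =
      HahnSeries.C (HahnSeries.ofPowerSeries ℤ R (PowerSeries.mk (gen2 Db D F 0)) * pzH Db F) := by
    rw [HahnSeries.map_mul_ringHom, ← pLamW_eq_map, ← lSer_eq_map, map_mul]
    exact mul_eq_mul_of_sub_eq_add_mul h1 h2
  have hconst := HahnSeries.eq_C_of_map_C_eq_C hsep
  rwa [coeff_zero_pzH_mul_ofPowerSeries, PowerSeries.coeff_mk, gen2_one] at hconst

theorem stmt14 {R : Type*} [CommRing R] [Algebra ℚ R]
    (D Db : ℕ → Derivation ℚ R R)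
    (hDD : ∀ n m (x : R), D n (D m x) = D m (D n x))
    (hDDb : ∀ n m (x : R), D n (Db m x) = Db m (D n x))
    (hDbDb : ∀ n m (x : R), Db n (Db m x) = Db m (Db n x)) (F : R)
    (h1 : pLamW D F - mSer (gen2 Db D F 0)
        = (pLamW D F + mSer (gen2 Db D F 0)) * EW D Db F)
    (h2 : HahnSeries.C (pzH Db F) - lSer (gen2 D Db F 0)
        = (HahnSeries.C (pzH Db F) + lSer (gen2 D Db F 0)) * EW D Db F) :
    pzH D F * HahnSeries.ofPowerSeries ℤ R (PowerSeries.mk (gen2 D Db F 0))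
        = HahnSeries.C ((-2 : ℚ) • D 0 (Db 0 F)) ∧
    HahnSeries.ofPowerSeries ℤ R (PowerSeries.mk (gen2 Db D F 0)) * pzH Db F
        = HahnSeries.C ((-2 : ℚ) • D 0 (Db 0 F)) :=
  stmt14_general D Db F h1 h2

end
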